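/- arXiv:2511.04602 — 5 statements merged into one kernel-verified Lean document; each statement's English description precedes it below -/
import Mathlib

section
/- Let n ≥ 3 and let λ_1 < λ_2 < ⋯ < λ_n be pairwise distinct reals, and let M be the fundamental B-spline with knots λ_1, …, λ_n. Then for every threshold t_l ∈ [λ_1, λ_2], the lower-tail probability satisfies ∫_{λ_1}^{t_l} M(u) du ≤ ((t_l − λ_1)/(λ_2 − λ_1))^{n−1}. -/
open MeasureTheory

/-- The fundamental B-spline with knots `lam 0, …, lam (n-1)`. -/
noncomputable def fundamentalBSpline (n : ℕ) (lam : Fin n → ℝ) (u : ℝ) : ℝ :=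
  ((n : ℝ) - 1) * ∑ k : Fin n,
    max (lam k - u) 0 ^ (n - 2) / ∏ i ∈ Finset.univ.erase k, (lam k - lam i)

/-!
On `[λ₁, t]` with `t ≤ λ₂` every truncated power with `k ≥ 2` is the full power `(λ_k - u)^(n-2)`.
The divided difference over the `n` knots of the polynomial `(· - u)^(n-2)`, of degree `< n - 1`,
vanishes, so these terms add up to minus the `k = 1` term, and
`M u = (n-1) (u - λ₁)^(n-2) / ∏_{j ≥ 2} (λ_j - λ₁)`. Integrating gives
`(t - λ₁)^(n-1) / ∏_{j ≥ 2} (λ_j - λ₁)`, and each of the `n - 1` factors is at least `λ₂ - λ₁`.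
-/

open Finset Polynomial

namespace Lagrange

variable {F ι : Type*} [Field F] [DecidableEq ι] {s : Finset ι} {v : ι → F}

theorem sum_eval_div_prod_eq_zero (hvs : Set.InjOn v s) {P : F[X]}
    (hP : P.natDegree < #s - 1) :
    ∑ i ∈ s, P.eval (v i) / ∏ j ∈ s.erase i, (v i - v j) = 0 := by
  rw [← coeff_eq_sum hvs (degree_lt_iff_coeff_zero _ _ |>.mpr fun m hm => ?_)]
  · exact coeff_eq_zero_of_natDegree_lt hP
  · exact coeff_eq_zero_of_natDegree_lt (by omega)

theorem sum_pow_sub_div_prod_eq_zero (hvs : Set.InjOn v s) {k : ℕ} (hk : k < #s - 1) (u : F) :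
    ∑ i ∈ s, (v i - u) ^ k / ∏ j ∈ s.erase i, (v i - v j) = 0 := by
  have hdeg : ((X - C u) ^ k).natDegree < #s - 1 := by simpa using hk
  simpa only [eval_pow, eval_sub, eval_X, eval_C] using sum_eval_div_prod_eq_zero hvs hdeg

end Lagrange

theorem Finset.pow_sub_div_prod_sub_eq_neg {ι F : Type*} [Field F] (s : Finset ι) (y : ι → F)
    {m : ℕ} (hs : #s = m + 1) (x u : F) :
    (x - u) ^ m / ∏ j ∈ s, (x - y j) = -((u - x) ^ m / ∏ j ∈ s, (y j - x)) := by
  have hprod : ∏ j ∈ s, (x - y j) = (-1) ^ (m + 1) * ∏ j ∈ s, (y j - x) := by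
    rw [← hs, ← prod_neg]; simp
  rw [hprod, show x - u = -(u - x) by ring, neg_pow, pow_succ]
  by_cases h : ∏ j ∈ s, (y j - x) = 0
  · simp [h]
  · field_simp

section FirstKnotInterval

variable {n : ℕ} {lam : Fin n → ℝ} {a : Fin n}

-- `3 ≤ n`: for `n = 2` the summand of `a` is `0 ^ 0 = 1` over a nonzero product.
theorem fundamentalBSpline_eq_of_le_of_forall_le (hn : 3 ≤ n) (hlam : Function.Injective lam)
    {u : ℝ} (hau : lam a ≤ u) (hu : ∀ k ≠ a, u ≤ lam k) :
    fundamentalBSpline n lam u =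
      ((n : ℝ) - 1) * ((u - lam a) ^ (n - 2) / ∏ j ∈ univ.erase a, (lam j - lam a)) := by
  have hcard : #(univ.erase a) = n - 2 + 1 := by rw [card_erase_of_mem (mem_univ a), card_fin]; omega
  have hvanish := Lagrange.sum_pow_sub_div_prod_eq_zero (s := univ) hlam.injOn (k := n - 2)
    (by rw [card_fin]; omega) u
  rw [← add_sum_erase _ _ (mem_univ a), pow_sub_div_prod_sub_eq_neg _ _ hcard] at hvanish
  rw [fundamentalBSpline, ← add_sum_erase _ _ (mem_univ a), max_eq_right (by linarith),
    zero_pow (by omega), zero_div, zero_add]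
  congr 1
  rw [sum_congr rfl fun k hk => by rw [max_eq_left (sub_nonneg.2 (hu k (ne_of_mem_erase hk)))]]
  linarith

theorem integral_fundamentalBSpline_of_le_of_forall_le (hn : 3 ≤ n)
    (hlam : Function.Injective lam) {t : ℝ} (hat : lam a ≤ t) (ht : ∀ k ≠ a, t ≤ lam k) :
    ∫ u in lam a..t, fundamentalBSpline n lam u =
      (t - lam a) ^ (n - 1) / ∏ j ∈ univ.erase a, (lam j - lam a) := by
  have hspline : Set.EqOn (fundamentalBSpline n lam)
      (fun u => ((n : ℝ) - 1) * ((u - lam a) ^ (n - 2) / ∏ j ∈ univ.erase a, (lam j - lam a)))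
      (Set.uIcc (lam a) t) := by
    intro u hu
    rw [Set.uIcc_of_le hat] at hu
    exact fundamentalBSpline_eq_of_le_of_forall_le hn hlam hu.1 fun k hk => hu.2.trans (ht k hk)
  have hexp : n - 2 + 1 = n - 1 := by omega
  have hcast : ((n - 2 : ℕ) : ℝ) + 1 = (n : ℝ) - 1 := by
    rw [Nat.cast_sub (by omega)]; push_cast; ring
  rw [intervalIntegral.integral_congr hspline, intervalIntegral.integral_const_mul,
    intervalIntegral.integral_div, intervalIntegral.integral_comp_sub_right (· ^ (n - 2)),
    integral_pow, sub_self, hexp, zero_pow (by omega), sub_zero, hcast]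
  have : (n : ℝ) - 1 ≠ 0 := by
    have : (3 : ℝ) ≤ n := by exact_mod_cast hn
    linarith
  field_simp

theorem integral_fundamentalBSpline_le {b : Fin n} (hn : 3 ≤ n) (hlam : Function.Injective lam)
    (hab : lam a < lam b) (hb : ∀ k ≠ a, lam b ≤ lam k) {t : ℝ} (ht : t ∈ Set.Icc (lam a) (lam b)) :
    ∫ u in lam a..t, fundamentalBSpline n lam u ≤ ((t - lam a) / (lam b - lam a)) ^ (n - 1) := by
  have hcard : #(univ.erase a) = n - 1 := by rw [card_erase_of_mem (mem_univ a), card_fin]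
  have hprod : (lam b - lam a) ^ (n - 1) ≤ ∏ j ∈ univ.erase a, (lam j - lam a) := by
    rw [← hcard, ← prod_const]
    exact prod_le_prod (fun _ _ => by linarith) fun j hj => by
      linarith [hb j (ne_of_mem_erase hj)]
  rw [integral_fundamentalBSpline_of_le_of_forall_le hn hlam ht.1 fun k hk => ht.2.trans (hb k hk),
    div_pow]
  have : 0 ≤ t - lam a := by linarith [ht.1]
  gcongr

end FirstKnotInterval

/-- Lower-tail probability bound: for every threshold `t_l ∈ [λ_1, λ_2]`,
`∫_{λ_1}^{t_l} M(u) du ≤ ((t_l − λ_1)/(λ_2 − λ_1))^{n−1}`. -/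
theorem fundamentalBSpline_lower_tail_probability_bound
    (n : ℕ) (hn : 3 ≤ n) (lam : Fin n → ℝ) (hlam : StrictMono lam) :
    ∀ t_l ∈ Set.Icc (lam ⟨0, by omega⟩) (lam ⟨1, by omega⟩),
      (∫ u in (lam ⟨0, by omega⟩)..t_l, fundamentalBSpline n lam u)
        ≤ ((t_l - lam ⟨0, by omega⟩) / (lam ⟨1, by omega⟩ - lam ⟨0, by omega⟩)) ^ (n - 1) := by
  intro t_l ht
  refine integral_fundamentalBSpline_le hn hlam.injective (hlam (by simp [Fin.lt_def]))
    (fun k hk => hlam.monotone ?_) ht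
  rw [Fin.le_def]
  exact Nat.one_le_iff_ne_zero.2 fun h => hk (Fin.ext h)
end

section
/- Let n ≥ 3 and let λ_1 < λ_2 < ⋯ < λ_n be pairwise distinct reals, and let M be the fundamental B-spline with knots λ_1, …, λ_n. Then for every threshold t_h ∈ [λ_{n−1}, λ_n], the upper-tail probability satisfies ∫_{t_h}^{λ_n} M(u) du ≤ ((λ_n − t_h)/(λ_n − λ_{n−1}))^{n−1}. -/
open MeasureTheory

/-!
Beyond the second largest knot `a = λ_{n-1}` only the truncated power of the largest knot
`b = λ_n` survives, so there `M(u) = (n-1)(b-u)^{n-2}/P` with `P = ∏_{i<n} (b - λ_i)`.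
Hence the tail integral equals `(b - t)^{n-1}/P`, and every factor of `P` is at least `b - a`.
-/

open Finset

lemma intervalIntegral.integral_sub_pow (t b : ℝ) (m : ℕ) :
    ∫ u in t..b, (b - u) ^ m = (b - t) ^ (m + 1) / (m + 1) := by
  rw [intervalIntegral.integral_comp_sub_left (fun x => x ^ m) b, sub_self, integral_pow,
    zero_pow m.succ_ne_zero, sub_zero]

lemma pow_le_prod_erase_sub {ι : Type*} [Fintype ι] [DecidableEq ι] (lam : ι → ℝ) (k : ι)
    {a : ℝ} (ha : ∀ i ≠ k, lam i ≤ a) (hak : a ≤ lam k) :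
    (lam k - a) ^ (Fintype.card ι - 1) ≤ ∏ i ∈ univ.erase k, (lam k - lam i) := by
  calc (lam k - a) ^ (Fintype.card ι - 1) = ∏ _i ∈ univ.erase k, (lam k - a) := by
        rw [prod_const, card_erase_of_mem (mem_univ k), card_univ]
    _ ≤ ∏ i ∈ univ.erase k, (lam k - lam i) :=
        prod_le_prod (fun _ _ => sub_nonneg.2 hak)
          fun i hi => sub_le_sub_left (ha i (ne_of_mem_erase hi)) _

lemma fundamentalBSpline_eq_of_forall_le {n : ℕ} (hn : 3 ≤ n) (lam : Fin n → ℝ) (k : Fin n)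
    {u : ℝ} (hu : ∀ i ≠ k, lam i ≤ u) :
    fundamentalBSpline n lam u =
      ((n : ℝ) - 1) * max (lam k - u) 0 ^ (n - 2) / ∏ i ∈ univ.erase k, (lam k - lam i) := by
  rw [fundamentalBSpline, sum_eq_single k, mul_div_assoc]
  · intro i _ hi
    rw [max_eq_right (sub_nonpos.2 (hu i hi)), zero_pow (by omega), zero_div]
  · simp

lemma integral_fundamentalBSpline_of_forall_le {n : ℕ} (hn : 3 ≤ n) (lam : Fin n → ℝ)
    (k : Fin n) {t : ℝ} (ht : ∀ i ≠ k, lam i ≤ t) (htk : t ≤ lam k) :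
    ∫ u in t..lam k, fundamentalBSpline n lam u =
      (lam k - t) ^ (n - 1) / ∏ i ∈ univ.erase k, (lam k - lam i) := by
  have hM : ∀ u ∈ Set.uIcc t (lam k), fundamentalBSpline n lam u =
      ((n : ℝ) - 1) / (∏ i ∈ univ.erase k, (lam k - lam i)) * (lam k - u) ^ (n - 2) := by
    intro u hu
    rw [Set.uIcc_of_le htk] at hu
    rw [fundamentalBSpline_eq_of_forall_le hn lam k fun i hi => (ht i hi).trans hu.1,
      max_eq_left (sub_nonneg.2 hu.2)]
    ring
  have hn' : ((n - 2 : ℕ) : ℝ) + 1 = (n : ℝ) - 1 := by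
    rw [Nat.cast_sub (by omega)]
    ring
  have hn1 : (n : ℝ) - 1 ≠ 0 := by
    rw [← hn']
    positivity
  rw [intervalIntegral.integral_congr hM, intervalIntegral.integral_const_mul,
    intervalIntegral.integral_sub_pow, hn', show n - 2 + 1 = n - 1 by omega]
  field_simp

/-- Upper-tail probability bound: for every threshold `t_h ∈ [λ_{n−1}, λ_n]`,
`∫_{t_h}^{λ_n} M(u) du ≤ ((λ_n − t_h)/(λ_n − λ_{n−1}))^{n−1}`. -/
theorem fundamentalBSpline_upper_tail_probability_bound
    (n : ℕ) (hn : 3 ≤ n) (lam : Fin n → ℝ) (hlam : StrictMono lam) :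
    ∀ t_h ∈ Set.Icc (lam ⟨n - 2, by omega⟩) (lam ⟨n - 1, by omega⟩),
      (∫ u in t_h..(lam ⟨n - 1, by omega⟩), fundamentalBSpline n lam u)
        ≤ ((lam ⟨n - 1, by omega⟩ - t_h) /
            (lam ⟨n - 1, by omega⟩ - lam ⟨n - 2, by omega⟩)) ^ (n - 1) := by
  rintro t ⟨hat, htb⟩
  have hbelow : ∀ i ≠ (⟨n - 1, by omega⟩ : Fin n), lam i ≤ lam ⟨n - 2, by omega⟩ := by
    intro i hi
    refine hlam.monotone (Fin.le_def.2 ?_)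
    have := Fin.val_ne_of_ne hi
    dsimp only at this ⊢
    omega
  have hab : lam ⟨n - 2, by omega⟩ < lam ⟨n - 1, by omega⟩ :=
    hlam (Fin.lt_def.2 (by dsimp only; omega))
  rw [integral_fundamentalBSpline_of_forall_le hn lam _ (fun i hi => (hbelow i hi).trans hat) htb,
    div_pow]
  have hP := pow_le_prod_erase_sub lam _ hbelow hab.le
  rw [Fintype.card_fin] at hP
  exact div_le_div_of_nonneg_left (pow_nonneg (sub_nonneg.2 htb) _)
    (pow_pos (sub_pos.2 hab) _) hP
end

section
/- Let n ≥ 3 and let λ_1 < λ_2 < ⋯ < λ_n be pairwise distinct reals, let M be the fundamental B-spline with knots λ_1, …, λ_n, and let μ = (1/n) Σ_{i=1}^{n} λ_i. Then the variance of the distribution with density M satisfies ∫_{-∞}^{∞} (t − μ)² · M(t) dt = (1/((n+1)·n²)) · Σ_{1 ≤ j < i ≤ n} (λ_i − λ_j)². -/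
/-!
Write `Δ[f] = Σ_k f(λ_k) / Π_{i≠k} (λ_k − λ_i)` for the divided difference on the knots, so that
`M(u) = (n−1) Δ[x ↦ (x − u)₊^{n−2}]`, and `e₁ = Σ λ_i`, `p₂ = Σ λ_i²`. Since `Δ` annihilates
polynomials of degree `< n − 1`, `M` vanishes left of the knots, and exchanging `∫` with the
finite sum `Δ` gives, for knots `≥ 0`, `∫ g M = (n−1) Δ[x ↦ ∫₀ˣ g(t) (x − t)^{n−2} dt]`. For
`g(t) = (t − ν)²` the inner integral is an explicit combination of `x^{n+1}, x^n, x^{n−1}`, whose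
divided differences are `(e₁² + p₂)/2`, `e₁` and `1`: reduce modulo the nodal polynomial
`Π (x − λ_i)` and read off the coefficient of `x^{n−1}` through Lagrange interpolation, using
Newton's identity `2 e₂ = e₁² − p₂` for the coefficient of `x^{n−2}`. After translating the knots
this gives `∫ (t − ν)² M = (e₁² + p₂)/(n(n+1)) − 2ν e₁/n + ν²` for all distinct knots; at
`ν = e₁/n` it equals `(n p₂ − e₁²)/((n+1)n²)`, and `n p₂ − e₁² = Σ_{j<i} (λ_i − λ_j)²`.
-/

open MeasureTheory

open Finset Polynomial Lagrange

section DividedDifference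

variable {ι : Type*} [Fintype ι]

theorem coeff_nodal_card_sub_one {R : Type*} [CommRing R] (v : ι → R) [Nonempty ι] :
    (nodal univ v).coeff (Fintype.card ι - 1) = -∑ i, v i :=
  prod_X_sub_C_coeff_card_pred univ v Fintype.card_pos

theorem two_mul_coeff_nodal_card_sub_two {R : Type*} [CommRing R] (v : ι → R)
    (hcard : 2 ≤ Fintype.card ι) :
    2 * (nodal univ v).coeff (Fintype.card ι - 2) = (∑ i, v i) ^ 2 - ∑ i, v i ^ 2 := by
  have hW : nodal univ v = ((univ.val.map v).map fun t => X - C t).prod := by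
    rw [nodal, prod_eq_multiset_prod, Multiset.map_map]; rfl
  have newton := congrArg (MvPolynomial.aeval v) (MvPolynomial.mul_esymm_eq_sum ι R 2)
  rw [show {a ∈ antidiagonal 2 | a.1 < 2} = {(0, 2), (1, 1)} by decide, sum_pair (by decide),
    MvPolynomial.esymm_zero, MvPolynomial.esymm_one] at newton
  simp only [map_mul, map_add, map_pow, map_neg, map_one, map_sum, map_natCast, pow_one,
    MvPolynomial.aeval_esymm_eq_multiset_esymm, MvPolynomial.psum, MvPolynomial.aeval_X] at newton
  rw [hW, Multiset.prod_X_sub_C_coeff _ (by simp), Multiset.card_map, card_val, card_univ,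
    Nat.sub_sub_self hcard]
  linear_combination newton

variable {F : Type*} [Field F] [DecidableEq ι]

def dividedDifference (v : ι → F) (f : F → F) : F :=
  ∑ k, f (v k) / ∏ i ∈ univ.erase k, (v k - v i)

variable {v : ι → F}

theorem dividedDifference_congr {f g : F → F} (h : ∀ k, f (v k) = g (v k)) :
    dividedDifference v f = dividedDifference v g := by
  simp only [dividedDifference, h]

theorem dividedDifference_add (f g : F → F) :
    dividedDifference v (fun x => f x + g x) = dividedDifference v f + dividedDifference v g := by
  simp only [dividedDifference, add_div, sum_add_distrib]

theorem dividedDifference_sub (f g : F → F) :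
    dividedDifference v (fun x => f x - g x) = dividedDifference v f - dividedDifference v g := by
  simp only [dividedDifference, sub_div, sum_sub_distrib]

theorem dividedDifference_const_mul (c : F) (f : F → F) :
    dividedDifference v (fun x => c * f x) = c * dividedDifference v f := by
  simp only [dividedDifference, mul_div_assoc, mul_sum]

theorem dividedDifference_eval_of_degree_lt (hv : Function.Injective v) {p : F[X]}
    (hp : p.degree < Fintype.card ι) :
    dividedDifference v p.eval = p.coeff (Fintype.card ι - 1) :=
  (coeff_eq_sum hv.injOn hp).symm

theorem dividedDifference_eval_of_degree_le [Nonempty ι] (hv : Function.Injective v) {p : F[X]}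
    (hp : p.degree ≤ Fintype.card ι) :
    dividedDifference v p.eval
      = p.coeff (Fintype.card ι - 1) + p.coeff (Fintype.card ι) * ∑ i, v i := by
  have hW : (nodal univ v).natDegree = Fintype.card ι := by simp [natDegree_nodal]
  have hlead : (nodal univ v).coeff (Fintype.card ι) = 1 := hW ▸ nodal_monic.coeff_natDegree
  set q := p - C (p.coeff (Fintype.card ι)) * nodal univ v
  have hq : q.degree < Fintype.card ι := by
    refine (degree_lt_iff_coeff_zero _ _).2 fun m hm => ?_
    rcases (show Fintype.card ι ≤ m by exact_mod_cast hm).eq_or_lt with rfl | hlt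
    · simp [q, hlead]
    · have hpm : p.degree < m := hp.trans_lt (by exact_mod_cast hlt)
      simp [q, coeff_eq_zero_of_degree_lt hpm, coeff_eq_zero_of_natDegree_lt (hW ▸ hlt)]
  have hqv : ∀ k, q.eval (v k) = p.eval (v k) := fun k => by
    simp [q, eval_nodal_at_node (mem_univ k)]
  rw [← dividedDifference_congr (f := q.eval) hqv, dividedDifference_eval_of_degree_lt hv hq]
  simp [q, coeff_nodal_card_sub_one]

theorem dividedDifference_sub_pow_eq_zero (hv : Function.Injective v) (c : F) {j : ℕ}
    (hj : j + 1 < Fintype.card ι) : dividedDifference v (fun x => (x - c) ^ j) = 0 := by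
  have hdeg : ((X - C c) ^ j).natDegree = j := by simp
  have h := dividedDifference_eval_of_degree_lt hv (p := (X - C c) ^ j)
    (degree_le_natDegree.trans_lt (by rw [hdeg]; exact_mod_cast (by omega : j < _)))
  rw [coeff_eq_zero_of_natDegree_lt (by omega)] at h
  simpa using h

theorem dividedDifference_pow_card_sub_one [Nonempty ι] (hv : Function.Injective v) :
    dividedDifference v (· ^ (Fintype.card ι - 1)) = 1 := by
  have h := dividedDifference_eval_of_degree_lt hv (p := X ^ (Fintype.card ι - 1))
    (by rw [degree_X_pow]; exact_mod_cast Nat.sub_lt Fintype.card_pos one_pos)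
  simpa using h

theorem dividedDifference_pow_card [Nonempty ι] (hv : Function.Injective v) :
    dividedDifference v (· ^ Fintype.card ι) = ∑ i, v i := by
  have h := dividedDifference_eval_of_degree_le hv (p := X ^ Fintype.card ι) (by simp)
  simpa [coeff_X_pow, (Nat.sub_lt Fintype.card_pos one_pos).ne] using h

theorem two_mul_dividedDifference_pow_card_add_one (hv : Function.Injective v)
    (hcard : 2 ≤ Fintype.card ι) :
    2 * dividedDifference v (· ^ (Fintype.card ι + 1)) = (∑ i, v i) ^ 2 + ∑ i, v i ^ 2 := by
  obtain ⟨k, hk⟩ : ∃ k, Fintype.card ι = k + 2 := ⟨_, (Nat.sub_add_cancel hcard).symm⟩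
  have : Nonempty ι := Fintype.card_pos_iff.1 (by omega)
  set r := X ^ Fintype.card ι - nodal univ v
  have hr : r.degree < Fintype.card ι := by
    have h := degree_sub_lt_left (p := X ^ Fintype.card ι) (q := nodal univ v)
      (by simp [degree_nodal]) (by simp) (by simp [nodal_monic.leadingCoeff])
    simpa using h
  have hrv : ∀ i, (X * r).eval (v i) = v i ^ (Fintype.card ι + 1) := fun i => by
    simp [r, eval_nodal_at_node (mem_univ i), pow_succ']
  have h := dividedDifference_eval_of_degree_le hv (p := X * r) (by
    rw [mul_comm, degree_mul_X]; exact Nat.WithBot.add_one_le_of_lt hr)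
  rw [dividedDifference_congr (g := (· ^ (Fintype.card ι + 1))) hrv] at h
  rw [h]
  have h1 : (nodal univ v).coeff (k + 1) = -∑ i, v i := by
    simpa [hk] using coeff_nodal_card_sub_one v
  have h2 : 2 * (nodal univ v).coeff k = (∑ i, v i) ^ 2 - ∑ i, v i ^ 2 := by
    simpa [hk] using two_mul_coeff_nodal_card_sub_two v hcard
  simp only [r, hk, Nat.add_one_sub_one, coeff_X_mul, coeff_sub, coeff_X_pow,
    Nat.left_eq_add, Nat.add_left_cancel_iff, OfNat.ofNat_ne_zero, OfNat.one_ne_ofNat, if_false,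
    zero_sub]
  linear_combination (-1) * h2 - 2 * (∑ i, v i) * h1

end DividedDifference

theorem sum_sum_Iio_sub_sq {α : Type*} [LinearOrder α] [Fintype α] [LocallyFiniteOrderTop α]
    [LocallyFiniteOrderBot α] (z : α → ℝ) :
    ∑ i, ∑ j ∈ Iio i, (z i - z j) ^ 2 = Fintype.card α * ∑ i, z i ^ 2 - (∑ i, z i) ^ 2 := by
  classical
  have hswap : ∑ i, ∑ j ∈ Iio i, (z i - z j) ^ 2 = ∑ j, ∑ i ∈ Ioi j, (z i - z j) ^ 2 :=
    sum_comm' fun i j => by simp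
  have hpairs := sum_sum_Ioi_add_eq_sum_sum_off_diag fun i j => (z i - z j) ^ 2
  have hdiag : ∀ i, ∑ j ∈ {i}ᶜ, (z j - z i) ^ 2 = ∑ j, (z j - z i) ^ 2 := fun i => by
    rw [Fintype.sum_eq_add_sum_compl i, sub_self, zero_pow two_ne_zero, zero_add]
  have hsym : ∀ i j, (z j - z i) ^ 2 + (z i - z j) ^ 2 = 2 * (z j - z i) ^ 2 := fun i j => by ring
  simp only [hsym, hdiag, ← mul_sum, ← hswap] at hpairs
  have hexpand : ∑ i, ∑ j, (z j - z i) ^ 2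
      = 2 * Fintype.card α * ∑ i, z i ^ 2 - 2 * (∑ i, z i) ^ 2 := by
    simp only [sub_sq, sum_add_distrib, sum_sub_distrib, ← mul_sum, ← sum_mul, sum_const,
      card_univ, nsmul_eq_mul]
    ring
  linarith

section BSpline

variable {n : ℕ} {lam : Fin n → ℝ}

theorem fundamentalBSpline_eq_dividedDifference (u : ℝ) :
    fundamentalBSpline n lam u
      = (n - 1) * dividedDifference lam (fun x => max (x - u) 0 ^ (n - 2)) :=
  rfl

theorem fundamentalBSpline_eq_zero_of_le (hn : 2 ≤ n) (hlam : Function.Injective lam) {u : ℝ}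
    (hu : ∀ k, u ≤ lam k) : fundamentalBSpline n lam u = 0 := by
  rw [fundamentalBSpline_eq_dividedDifference,
    dividedDifference_congr (g := fun x => (x - u) ^ (n - 2))
      fun k => by rw [max_eq_left (sub_nonneg.2 (hu k))],
    dividedDifference_sub_pow_eq_zero hlam u (by simp; omega), mul_zero]

theorem fundamentalBSpline_eq_zero_of_ge (hn : 3 ≤ n) {u : ℝ} (hu : ∀ k, lam k ≤ u) :
    fundamentalBSpline n lam u = 0 := by
  simp [fundamentalBSpline, max_eq_right (sub_nonpos.2 (hu _)), zero_pow (by omega : n - 2 ≠ 0)]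

theorem fundamentalBSpline_sub_const (c u : ℝ) :
    fundamentalBSpline n (fun k => lam k - c) u = fundamentalBSpline n lam (u + c) := by
  simp only [fundamentalBSpline, sub_sub_sub_cancel_right]
  simp only [sub_sub, add_comm c u]

theorem integral_mul_max_sub_zero_pow {g : ℝ → ℝ} (hg : Continuous g) {k : ℕ} (hk : k ≠ 0)
    {a x b : ℝ} (hax : a ≤ x) (hxb : x ≤ b) :
    ∫ t in a..b, g t * max (x - t) 0 ^ k = ∫ t in a..x, g t * (x - t) ^ k := by
  have hc : Continuous fun t => g t * max (x - t) 0 ^ k := by fun_prop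
  rw [← intervalIntegral.integral_add_adjacent_intervals (hc.intervalIntegrable a x)
    (hc.intervalIntegrable x b)]
  have hright : ∫ t in x..b, g t * max (x - t) 0 ^ k = 0 := by
    refine (intervalIntegral.integral_congr fun t ht => ?_).trans intervalIntegral.integral_zero
    rw [Set.uIcc_of_le hxb] at ht
    simp [max_eq_right (sub_nonpos.2 ht.1), zero_pow hk]
  rw [hright, add_zero]
  refine intervalIntegral.integral_congr fun t ht => ?_
  rw [Set.uIcc_of_le hax] at ht
  simp only [max_eq_left (sub_nonneg.2 ht.2)]

theorem integral_mul_fundamentalBSpline (hn : 3 ≤ n) (hlam : Function.Injective lam) {a : ℝ}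
    (ha : ∀ k, a ≤ lam k) {g : ℝ → ℝ} (hg : Continuous g) :
    ∫ t, g t * fundamentalBSpline n lam t
      = (n - 1) * dividedDifference lam (fun x => ∫ t in a..x, g t * (x - t) ^ (n - 2)) := by
  obtain ⟨b, hb⟩ := (Set.finite_range lam).bddAbove
  have hlb : ∀ k, lam k ≤ b := fun k => hb ⟨k, rfl⟩
  have hsupp : Function.support (fun t => g t * fundamentalBSpline n lam t) ⊆ Set.Ioc a b := by
    intro t ht
    by_contra hout
    rcases not_and_or.1 hout with h | h
    · exact ht (by dsimp only; rw [fundamentalBSpline_eq_zero_of_le (by omega) hlam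
        fun k => (not_lt.1 h).trans (ha k), mul_zero])
    · exact ht (by dsimp only; rw [fundamentalBSpline_eq_zero_of_ge hn
        fun k => (hlb k).trans (not_le.1 h).le, mul_zero])
  rw [← intervalIntegral.integral_eq_integral_of_support_subset hsupp]
  have hM : ∀ t, g t * fundamentalBSpline n lam t = (n - 1) * ∑ k,
      g t * max (lam k - t) 0 ^ (n - 2) / ∏ i ∈ univ.erase k, (lam k - lam i) := fun t => by
    rw [fundamentalBSpline, mul_left_comm, mul_sum]
    simp_rw [mul_div_assoc]
  simp_rw [hM]
  rw [intervalIntegral.integral_const_mul, intervalIntegral.integral_finsetSum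
    fun k _ => (by fun_prop : Continuous _).intervalIntegrable _ _]
  congr 1
  refine sum_congr rfl fun k _ => ?_
  rw [intervalIntegral.integral_div,
    integral_mul_max_sub_zero_pow hg (by omega) (ha k) (hlb k)]

theorem integral_sub_sq_mul_sub_pow (k : ℕ) (ν x : ℝ) :
    ∫ t in (0 : ℝ)..x, (t - ν) ^ 2 * (x - t) ^ k
      = 2 / ((k + 1) * (k + 2) * (k + 3)) * x ^ (k + 3)
        - 2 * ν / ((k + 1) * (k + 2)) * x ^ (k + 2) + ν ^ 2 / (k + 1) * x ^ (k + 1) := by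
  have hexp : ∀ s : ℝ, (x - s - ν) ^ 2 * s ^ k
      = (x - ν) ^ 2 * s ^ k - 2 * (x - ν) * s ^ (k + 1) + s ^ (k + 2) := fun s => by ring
  have h := intervalIntegral.integral_comp_sub_left (fun s => (x - s - ν) ^ 2 * s ^ k)
    (a := 0) (b := x) x
  simp only [sub_sub_cancel, sub_self, sub_zero, hexp] at h
  rw [h, intervalIntegral.integral_add, intervalIntegral.integral_sub,
    intervalIntegral.integral_const_mul, intervalIntegral.integral_const_mul]
  · simp only [integral_pow]
    push_cast
    field_simp
    ring
  all_goals exact (by fun_prop : Continuous _).intervalIntegrable _ _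

theorem integral_sub_sq_mul_fundamentalBSpline_of_nonneg (hn : 3 ≤ n)
    (hlam : Function.Injective lam) (hlam0 : ∀ k, 0 ≤ lam k) (ν : ℝ) :
    ∫ t, (t - ν) ^ 2 * fundamentalBSpline n lam t
      = ((∑ i, lam i) ^ 2 + ∑ i, lam i ^ 2) / (n * (n + 1)) - 2 * ν * (∑ i, lam i) / n
        + ν ^ 2 := by
  obtain ⟨k, rfl⟩ : ∃ k, n = k + 2 := ⟨n - 2, by omega⟩
  have h1 : dividedDifference lam (· ^ (k + 1)) = 1 := by
    simpa using dividedDifference_pow_card_sub_one hlam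
  have h2 : dividedDifference lam (· ^ (k + 2)) = ∑ i, lam i := by
    simpa using dividedDifference_pow_card hlam
  have h3 : dividedDifference lam (· ^ (k + 3)) = ((∑ i, lam i) ^ 2 + ∑ i, lam i ^ 2) / 2 := by
    rw [eq_div_iff two_ne_zero, mul_comm]
    simpa using two_mul_dividedDifference_pow_card_add_one hlam (by simp)
  rw [integral_mul_fundamentalBSpline hn hlam hlam0 (by fun_prop)]
  simp only [Nat.add_sub_cancel, integral_sub_sq_mul_sub_pow, dividedDifference_add,
    dividedDifference_sub, dividedDifference_const_mul]
  rw [h1, h2, h3]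
  push_cast
  field_simp
  ring

theorem integral_sub_sq_mul_fundamentalBSpline (hn : 3 ≤ n) (hlam : Function.Injective lam)
    (ν : ℝ) :
    ∫ t, (t - ν) ^ 2 * fundamentalBSpline n lam t
      = ((∑ i, lam i) ^ 2 + ∑ i, lam i ^ 2) / (n * (n + 1)) - 2 * ν * (∑ i, lam i) / n
        + ν ^ 2 := by
  obtain ⟨c, hc⟩ := (Set.finite_range lam).bddBelow
  have hshift : ∫ t, (t - ν) ^ 2 * fundamentalBSpline n lam t
      = ∫ t, (t - (ν - c)) ^ 2 * fundamentalBSpline n (fun k => lam k - c) t := by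
    rw [← integral_add_right_eq_self _ c]
    simp only [fundamentalBSpline_sub_const, sub_sub_eq_add_sub, add_sub_right_comm]
  rw [hshift, integral_sub_sq_mul_fundamentalBSpline_of_nonneg hn
    (fun i j h => hlam (sub_left_injective h)) (fun k => sub_nonneg.2 (hc ⟨k, rfl⟩))]
  simp only [sum_sub_distrib, sub_sq, sum_add_distrib, ← mul_sum, ← sum_mul, sum_const,
    card_univ, Fintype.card_fin, nsmul_eq_mul]
  field_simp
  ring

end BSpline

/-- The variance of the distribution with density the fundamental B-spline equals the
variance of the knots divided by `n + 1`:
`∫ (t − μ)² M(t) dt = (1/((n+1)n²)) Σ_{j<i} (λ_i − λ_j)²`, where `μ = (1/n) Σ_i λ_i`. -/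
theorem fundamentalBSpline_variance
    (n : ℕ) (hn : 3 ≤ n) (lam : Fin n → ℝ) (hlam : StrictMono lam)
    (μ : ℝ) (hμ : μ = (1 / (n : ℝ)) * ∑ i : Fin n, lam i) :
    (∫ t : ℝ, (t - μ) ^ 2 * fundamentalBSpline n lam t)
      = (1 / (((n : ℝ) + 1) * (n : ℝ) ^ 2)) *
          ∑ i : Fin n, ∑ j ∈ Finset.Iio i, (lam i - lam j) ^ 2 := by
  rw [integral_sub_sq_mul_fundamentalBSpline hn hlam.injective, sum_sum_Iio_sub_sq,
    Fintype.card_fin, hμ]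
  field_simp
  ring
end

section
/- Let n ≥ 1 and let λ_1, …, λ_n be real numbers with 0 ≤ λ_i ≤ 1 for all i. Then Σ_{1 ≤ j < i ≤ n} (λ_i − λ_j)² ≤ n²/4; consequently the variance (1/((n+1)·n²)) · Σ_{i>j} (λ_i − λ_j)² of the transmissivity distribution of a passive system is at most 1/(4(n+1)). Moreover, when n is even, equality holds if n/2 of the λ_i equal 0 and n/2 equal 1. -/
/-!
Writing `S = ∑ λᵢ` and `Q = ∑ λᵢ²`, Lagrange's identity gives `∑_{j<i} (λᵢ - λⱼ)² = n Q - S²`.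
On `[0, 1]` we have `λᵢ² ≤ λᵢ`, so this is at most `n S - S² = n²/4 - (n/2 - S)² ≤ n²/4`; for
`0/1`-valued `λ` the first inequality is an equality, and the second one is too when `S = n/2`.
-/

open Finset

lemma sum_sum_sub_sq {ι R : Type*} [Fintype ι] [CommRing R] (f : ι → R) :
    ∑ i, ∑ j, (f i - f j) ^ 2 = 2 * (Fintype.card ι * ∑ i, f i ^ 2 - (∑ i, f i) ^ 2) := by
  simp only [sub_sq, sum_add_distrib, sum_sub_distrib, ← mul_sum, ← sum_mul, sum_const,
    card_univ, nsmul_eq_mul]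
  ring

section Lagrange

variable {ι M R : Type*} [Fintype ι] [LinearOrder ι] [LocallyFiniteOrderBot ι]
  [LocallyFiniteOrderTop ι]

lemma sum_sum_Ioi_eq_sum_sum_Iio_swap [AddCommMonoid M] (g : ι → ι → M) :
    ∑ i, ∑ j ∈ Ioi i, g i j = ∑ i, ∑ j ∈ Iio i, g j i :=
  sum_comm' fun i j ↦ by simp

lemma sum_sum_eq_sum_diag_add_sum_sum_Iio [AddCommMonoid M] (g : ι → ι → M) :
    ∑ i, ∑ j, g i j = ∑ i, g i i + ∑ i, ∑ j ∈ Iio i, (g i j + g j i) := by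
  have split (i : ι) : ∑ j, g i j = g i i + (∑ j ∈ Ioi i, g i j + ∑ j ∈ Iio i, g i j) := by
    rw [Fintype.sum_eq_add_sum_compl i, ← sum_disjUnion (disjoint_Ioi_Iio i)]
    congr 2
    ext j
    simp [ne_comm]
  simp only [split, sum_add_distrib, sum_sum_Ioi_eq_sum_sum_Iio_swap]
  abel

lemma sum_sum_eq_two_nsmul_sum_sum_Iio_of_symm [AddCommMonoid M] {g : ι → ι → M}
    (hsymm : ∀ i j, g i j = g j i) (hdiag : ∀ i, g i i = 0) :
    ∑ i, ∑ j, g i j = 2 • ∑ i, ∑ j ∈ Iio i, g i j := by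
  simp only [sum_sum_eq_sum_diag_add_sum_sum_Iio, hdiag, sum_const_zero, zero_add, two_nsmul,
    ← sum_add_distrib]
  exact sum_congr rfl fun i _ ↦ sum_congr rfl fun j _ ↦ by rw [hsymm j i]

lemma sum_sum_Iio_sub_sq_s17 [CommRing R] [IsDomain R] [CharZero R] (f : ι → R) :
    ∑ i, ∑ j ∈ Iio i, (f i - f j) ^ 2 = Fintype.card ι * ∑ i, f i ^ 2 - (∑ i, f i) ^ 2 := by
  have h := sum_sum_sub_sq f
  rw [sum_sum_eq_two_nsmul_sum_sum_Iio_of_symm (fun i j ↦ by ring) (fun i ↦ by ring),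
    two_nsmul, ← two_mul] at h
  exact mul_left_cancel₀ two_ne_zero h

end Lagrange

section Bounds

variable {ι R : Type*} [Fintype ι]

lemma card_mul_sum_sq_sub_sq_sum_le [Field R] [LinearOrder R] [IsStrictOrderedRing R]
    {f : ι → R} (hf : ∀ i, f i ∈ Set.Icc 0 1) :
    Fintype.card ι * ∑ i, f i ^ 2 - (∑ i, f i) ^ 2 ≤ (Fintype.card ι : R) ^ 2 / 4 := by
  have hsq_le : ∑ i, f i ^ 2 ≤ ∑ i, f i :=
    sum_le_sum fun i _ ↦ pow_le_of_le_one (hf i).1 (hf i).2 two_ne_zero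
  calc Fintype.card ι * ∑ i, f i ^ 2 - (∑ i, f i) ^ 2
      ≤ Fintype.card ι * ∑ i, f i - (∑ i, f i) ^ 2 := by gcongr
    _ ≤ (Fintype.card ι : R) ^ 2 / 4 := by
      nlinarith [sq_nonneg ((Fintype.card ι : R) - 2 * ∑ i, f i)]

lemma card_mul_sum_sq_sub_sq_sum_of_zero_or_one [CommRing R] [DecidableEq R] {f : ι → R}
    (hf : ∀ i, f i = 0 ∨ f i = 1) :
    Fintype.card ι * ∑ i, f i ^ 2 - (∑ i, f i) ^ 2
      = #{i | f i = 1} * (Fintype.card ι - #{i | f i = 1}) := by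
  have hsq : ∑ i, f i ^ 2 = ∑ i, f i :=
    sum_congr rfl fun i _ ↦ by rcases hf i with h | h <;> simp [h]
  have hsum : ∑ i, f i = #{i | f i = 1} := by
    rw [← sum_boole]
    exact sum_congr rfl fun i _ ↦ by rcases hf i with h | h <;> simp [h]
  rw [hsq, hsum]
  ring

lemma forall_eq_zero_or_eq_one_of_card_filter [Zero R] [One R] [NeZero (1 : R)] [DecidableEq R]
    {f : ι → R} (h : #{i | f i = 0} + #{i | f i = 1} = Fintype.card ι) :
    ∀ i, f i = 0 ∨ f i = 1 := by
  classical
  have hdisj : Disjoint (univ.filter fun i ↦ f i = 0) (univ.filter fun i ↦ f i = 1) :=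
    disjoint_filter.2 fun i _ h0 h1 ↦ zero_ne_one (h0 ▸ h1)
  have hcard : #{i | f i = 0 ∨ f i = 1} = #(univ : Finset ι) := by
    rw [filter_or, card_union_of_disjoint hdisj, h, card_univ]
  exact fun i ↦ filter_card_eq hcard i (mem_univ i)

end Bounds

theorem passive_variance_bound_general
    (n : ℕ) (lam : Fin n → ℝ) (h : ∀ i, lam i ∈ Set.Icc (0 : ℝ) 1) :
    (∑ i : Fin n, ∑ j ∈ Finset.Iio i, (lam i - lam j) ^ 2 ≤ (n : ℝ) ^ 2 / 4) ∧
    ((1 / (((n : ℝ) + 1) * (n : ℝ) ^ 2)) *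
        ∑ i : Fin n, ∑ j ∈ Finset.Iio i, (lam i - lam j) ^ 2
      ≤ 1 / (4 * ((n : ℝ) + 1))) ∧
    (Even n →
      (Finset.univ.filter (fun i : Fin n => lam i = 0)).card = n / 2 →
      (Finset.univ.filter (fun i : Fin n => lam i = 1)).card = n / 2 →
      ∑ i : Fin n, ∑ j ∈ Finset.Iio i, (lam i - lam j) ^ 2 = (n : ℝ) ^ 2 / 4) := by
  have bound : ∑ i : Fin n, ∑ j ∈ Finset.Iio i, (lam i - lam j) ^ 2 ≤ (n : ℝ) ^ 2 / 4 := by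
    simpa [sum_sum_Iio_sub_sq_s17] using card_mul_sum_sq_sub_sq_sum_le h
  refine ⟨bound, ?_, ?_⟩
  · calc _ ≤ 1 / (((n : ℝ) + 1) * (n : ℝ) ^ 2) * ((n : ℝ) ^ 2 / 4) := by gcongr
      _ = 1 / (4 * ((n : ℝ) + 1)) * ((n : ℝ) ^ 2 / (n : ℝ) ^ 2) := by
          simp only [one_div, mul_inv]; ring
      _ ≤ 1 / (4 * ((n : ℝ) + 1)) := mul_le_of_le_one_right (by positivity) (div_self_le_one _)
  · rintro ⟨k, rfl⟩ h0 h1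
    have hk : (k + k) / 2 = k := by omega
    rw [hk] at h0 h1
    have hbool := forall_eq_zero_or_eq_one_of_card_filter (f := lam) (by simp [h0, h1])
    rw [sum_sum_Iio_sub_sq_s17, card_mul_sum_sq_sub_sq_sum_of_zero_or_one hbool, h1, Fintype.card_fin]
    push_cast
    ring

/-- For `λ_1, …, λ_n ∈ [0, 1]`: the sum `Σ_{j<i} (λ_i − λ_j)²` is at most `n²/4`; hence the
variance `(1/((n+1)n²)) Σ_{i>j} (λ_i − λ_j)²` of the transmissivity distribution of a passive
system is at most `1/(4(n+1))`. When `n` is even, equality holds if `n/2` of the `λ_i` equal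
`0` and `n/2` of them equal `1`. -/
theorem passive_variance_bound
    (n : ℕ) (hn : 1 ≤ n) (lam : Fin n → ℝ) (h : ∀ i, lam i ∈ Set.Icc (0 : ℝ) 1) :
    (∑ i : Fin n, ∑ j ∈ Finset.Iio i, (lam i - lam j) ^ 2 ≤ (n : ℝ) ^ 2 / 4) ∧
    ((1 / (((n : ℝ) + 1) * (n : ℝ) ^ 2)) *
        ∑ i : Fin n, ∑ j ∈ Finset.Iio i, (lam i - lam j) ^ 2
      ≤ 1 / (4 * ((n : ℝ) + 1))) ∧
    (Even n →
      (Finset.univ.filter (fun i : Fin n => lam i = 0)).card = n / 2 →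
      (Finset.univ.filter (fun i : Fin n => lam i = 1)).card = n / 2 →
      ∑ i : Fin n, ∑ j ∈ Finset.Iio i, (lam i - lam j) ^ 2 = (n : ℝ) ^ 2 / 4) :=
  passive_variance_bound_general n lam h
end

section
/- (One-sided Vysochanskii–Petunin inequality) Let X be a real random variable whose law has a density f with respect to Lebesgue measure that is unimodal, i.e., there exists m ∈ ℝ such that f is nondecreasing on (−∞, m] and nonincreasing on [m, ∞). Suppose X has finite mean μ and finite variance σ² > 0. Then for every c ≥ √(5/3) · σ, P(X − μ ≥ c) ≤ (4/9) · σ²/(σ² + c²), and for every c with 0 < c ≤ √(5/3) · σ, P(X − μ ≥ c) ≤ (4/3) · σ²/(σ² + c²) − 1/3. -/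
/-!
Let `u = σ²/c`, `r = c + u` and `δ = μ - u`, so that `μ + c = δ + r` and
`E (X - δ)² = σ² + u² = u r`. For a parabola `p` with axis `δ`,
`P(X ≥ δ + r) = E p(X) - E φ(X)` with `φ = p - 1_{[δ + r, ∞)}`, so it suffices to choose `p` with
`E φ(X) ≥ 0`. Comparing the unimodal density with a step function equal to it at the sign changes
of `φ` shows that `E φ(X) ≥ 0` once `φ` has the right sign pattern on each side of the mode `m`
and a nonnegative integral near `m`. The parabola is chosen according to the position of `m`
relative to `δ` and `δ + r`; the three resulting bounds are all at most `max (4t/9) (4t/3 - 1/3)`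
with `t = u / r = σ² / (σ² + c²)`, and this maximum is the claimed bound on either side of
`c = √(5/3) σ`.
-/

open MeasureTheory Set

theorem aemeasurable_of_monotoneOn_Iic_of_antitoneOn_Ici {μ : Measure ℝ} {f : ℝ → ℝ} {m : ℝ}
    (hmono : MonotoneOn f (Iic m)) (hanti : AntitoneOn f (Ici m)) : AEMeasurable f μ := by
  rw [← Measure.restrict_univ (μ := μ), ← Iic_union_Ici (a := m), aemeasurable_union_iff]
  exact ⟨aemeasurable_restrict_of_monotoneOn measurableSet_Iic hmono,
    aemeasurable_restrict_of_antitoneOn measurableSet_Ici hanti⟩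

theorem MonotoneOn.mul_le_mul_of_nonneg_mul_sub {g : ℝ → ℝ} {s : Set ℝ} (hg : MonotoneOn g s)
    {a x c : ℝ} (ha : a ∈ s) (hx : x ∈ s) (hc : 0 ≤ c * (x - a)) : g a * c ≤ g x * c := by
  rcases lt_trichotomy x a with h | rfl | h
  · have hc' : c ≤ 0 := by nlinarith
    exact mul_le_mul_of_nonpos_right (hg hx ha h.le) hc'
  · exact le_rfl
  · have hc' : 0 ≤ c := by nlinarith
    exact mul_le_mul_of_nonneg_right (hg ha hx h.le) hc'

theorem AntitoneOn.mul_le_mul_of_nonneg_mul_sub {g : ℝ → ℝ} {s : Set ℝ} (hg : AntitoneOn g s)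
    {a x c : ℝ} (ha : a ∈ s) (hx : x ∈ s) (hc : 0 ≤ c * (a - x)) : g a * c ≤ g x * c := by
  simpa only [Pi.neg_apply, neg_mul_neg] using
    hg.neg.mul_le_mul_of_nonneg_mul_sub ha hx (c := -c) (by linarith)

/-- On each side of `m`, `φ` is nonnegative away from an interval adjacent to `m`, has nonnegative
integral over that interval, and changes sign inside it at most once (at `y₁`, resp. `x₁`), being
nonnegative on the part nearer to `m`. -/
def IsUnimodalCertificate (φ : ℝ → ℝ) (m : ℝ) : Prop :=
  ∃ y₂ y₁ x₁ x₂ : ℝ, y₁ ≤ m ∧ m ≤ x₁ ∧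
    (∀ x ≤ y₂, 0 ≤ φ x) ∧ (∀ x ∈ Ioc y₂ m, 0 ≤ φ x * (x - y₁)) ∧ 0 ≤ ∫ x in Ioc y₂ m, φ x ∧
    (∀ x ∈ Ioc m x₂, 0 ≤ φ x * (x₁ - x)) ∧ (∀ x, x₂ < x → 0 ≤ φ x) ∧ 0 ≤ ∫ x in Ioc m x₂, φ x

theorem IsUnimodalCertificate.integral_mul_nonneg {φ g : ℝ → ℝ} {m : ℝ}
    (hφ : IsUnimodalCertificate φ m) (hloc : LocallyIntegrable φ)
    (hφg : Integrable (fun x => g x * φ x)) (hg : 0 ≤ g)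
    (hmono : MonotoneOn g (Iic m)) (hanti : AntitoneOn g (Ici m)) :
    0 ≤ ∫ x, g x * φ x := by
  obtain ⟨y₂, y₁, x₁, x₂, hy₁, hx₁, htailL, hsignL, hintL, hsignR, htailR, hintR⟩ := hφ
  have hloc_Ioc (a b : ℝ) : IntegrableOn φ (Ioc a b) :=
    (hloc.integrableOn_isCompact isCompact_Icc).mono_set Ioc_subset_Icc_self
  set ψ : ℝ → ℝ := (Ioc y₂ m).indicator (fun x => g y₁ * φ x) +
    (Ioc m x₂).indicator (fun x => g x₁ * φ x) with hψ
  have hψ_le : ψ ≤ fun x => g x * φ x := by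
    intro x
    by_cases hL : x ∈ Ioc y₂ m
    · have hR : x ∉ Ioc m x₂ := fun h => (not_lt.2 hL.2) h.1
      simpa [ψ, hL, hR] using
        hmono.mul_le_mul_of_nonneg_mul_sub (mem_Iic.2 hy₁) (mem_Iic.2 hL.2) (hsignL x hL)
    by_cases hR : x ∈ Ioc m x₂
    · simpa [ψ, hL, hR] using
        hanti.mul_le_mul_of_nonneg_mul_sub (mem_Ici.2 hx₁) (mem_Ici.2 hR.1.le) (hsignR x hR)
    have hφx : 0 ≤ φ x := by
      rcases le_or_gt x m with h | h
      · exact htailL x (by by_contra! h'; exact hL ⟨h', h⟩)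
      · exact htailR x (by by_contra! h'; exact hR ⟨h, h'⟩)
    simpa [ψ, hL, hR] using mul_nonneg (hg x) hφx
  have hpiece (a b c : ℝ) : Integrable ((Ioc a b).indicator (fun x => c * φ x)) :=
    IntegrableOn.integrable_indicator ((hloc_Ioc a b).const_mul c) measurableSet_Ioc
  have hψ_eq : ∫ x, ψ x = g y₁ * (∫ x in Ioc y₂ m, φ x) + g x₁ * ∫ x in Ioc m x₂, φ x := by
    rw [hψ, integral_add' (hpiece _ _ _) (hpiece _ _ _), integral_indicator measurableSet_Ioc,
      integral_indicator measurableSet_Ioc, integral_const_mul, integral_const_mul]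
  calc 0 ≤ g y₁ * (∫ x in Ioc y₂ m, φ x) + g x₁ * ∫ x in Ioc m x₂, φ x :=
        add_nonneg (mul_nonneg (hg _) hintL) (mul_nonneg (hg _) hintR)
    _ = ∫ x, ψ x := hψ_eq.symm
    _ ≤ ∫ x, g x * φ x := integral_mono ((hpiece _ _ _).add (hpiece _ _ _)) hφg hψ_le

theorem IsUnimodalCertificate.integral_nonneg {law : Measure ℝ} {f φ : ℝ → ℝ} {m : ℝ}
    (hφ : IsUnimodalCertificate φ m) (hloc : LocallyIntegrable φ) (hint : Integrable φ law)
    (hdens : law = volume.withDensity (fun x => ENNReal.ofReal (f x)))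
    (hmono : MonotoneOn f (Iic m)) (hanti : AntitoneOn f (Ici m)) :
    0 ≤ ∫ x, φ x ∂law := by
  have hmeas : AEMeasurable (fun x => ENNReal.ofReal (f x)) :=
    ENNReal.measurable_ofReal.comp_aemeasurable
      (aemeasurable_of_monotoneOn_Iic_of_antitoneOn_Ici hmono hanti)
  have hfin : ∀ᵐ x ∂volume, ENNReal.ofReal (f x) < ⊤ := ae_of_all _ fun _ => ENNReal.ofReal_lt_top
  subst hdens
  rw [integrable_withDensity_iff_integrable_smul₀' hmeas hfin] at hint
  rw [integral_withDensity_eq_integral_toReal_smul₀ hmeas hfin]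
  exact hφ.integral_mul_nonneg hloc hint (fun x => ENNReal.toReal_nonneg)
    (hmono.max monotoneOn_const) (hanti.max antitoneOn_const)

/-- The parabola with axis `x = δ` vanishing at `δ ± ρ` and equal to `1` at `δ ± e`. -/
noncomputable def parabola (δ ρ e x : ℝ) : ℝ := ((x - δ) ^ 2 - ρ ^ 2) / (e ^ 2 - ρ ^ 2)

noncomputable def parabolaSubIndicator (δ ρ e T x : ℝ) : ℝ :=
  parabola δ ρ e x - (Ici T).indicator 1 x

theorem integral_Ioc_parabola (δ ρ e : ℝ) {a b : ℝ} (hab : a ≤ b) :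
    ∫ x in Ioc a b, parabola δ ρ e x =
      (((b - δ) ^ 3 - (a - δ) ^ 3) / 3 - ρ ^ 2 * (b - a)) / (e ^ 2 - ρ ^ 2) := by
  rw [← intervalIntegral.integral_of_le hab]
  simp only [parabola]
  rw [intervalIntegral.integral_div, intervalIntegral.integral_sub,
    intervalIntegral.integral_comp_sub_right (fun x => x ^ 2), integral_pow]
  · simp only [Nat.reduceAdd, Nat.cast_ofNat, intervalIntegral.integral_const, smul_eq_mul]
    ring
  all_goals exact Continuous.intervalIntegrable (by fun_prop) _ _

theorem volume_Ioc_inter_Ici (a b T : ℝ) :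
    volume (Ioc a b ∩ Ici T) = ENNReal.ofReal (max b T - max a T) := by
  apply le_antisymm
  · calc volume (Ioc a b ∩ Ici T) ≤ volume (Icc (max a T) (max b T)) :=
          measure_mono fun x hx => ⟨max_le hx.1.1.le hx.2, hx.1.2.trans (le_max_left _ _)⟩
      _ = _ := Real.volume_Icc
  · calc ENNReal.ofReal (max b T - max a T) ≤ volume (Ioc (max a T) b) := by
          rw [Real.volume_Ioc, ENNReal.ofReal_le_ofReal_iff']
          rcases le_total T b with h | h
          · exact .inl (by rw [max_eq_left h])
          · exact .inr (by linarith [max_eq_right h, le_max_right a T])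
      _ ≤ volume (Ioc a b ∩ Ici T) :=
          measure_mono fun x hx => ⟨⟨(le_max_left _ _).trans_lt hx.1, hx.2⟩,
            (le_max_right _ _).trans hx.1.le⟩

theorem locallyIntegrable_parabolaSubIndicator (δ ρ e T : ℝ) :
    LocallyIntegrable (parabolaSubIndicator δ ρ e T) :=
  (Continuous.locallyIntegrable (by unfold parabola; fun_prop)).sub
    ((locallyIntegrable_const 1).indicator measurableSet_Ici)

theorem integral_Ioc_parabolaSubIndicator (δ ρ e T : ℝ) {a b : ℝ} (hab : a ≤ b) :
    ∫ x in Ioc a b, parabolaSubIndicator δ ρ e T x =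
      (((b - δ) ^ 3 - (a - δ) ^ 3) / 3 - ρ ^ 2 * (b - a)) / (e ^ 2 - ρ ^ 2) -
        (max b T - max a T) := by
  have hpar : IntegrableOn (parabola δ ρ e) (Ioc a b) :=
    (Continuous.integrableOn_Ioc (by unfold parabola; fun_prop))
  have hind : IntegrableOn ((Ici T).indicator (1 : ℝ → ℝ)) (Ioc a b) :=
    (integrableOn_const measure_Ioc_lt_top.ne).indicator measurableSet_Ici
  simp only [parabolaSubIndicator]
  rw [integral_sub hpar hind, integral_Ioc_parabola δ ρ e hab,
    integral_indicator_one measurableSet_Ici, measureReal_restrict_apply measurableSet_Ici,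
    measureReal_def, inter_comm, volume_Ioc_inter_Ici,
    ENNReal.toReal_ofReal (sub_nonneg.2 (max_le_max_right T hab))]

section Sign

variable {δ ρ e T x : ℝ}

theorem parabolaSubIndicator_nonneg_of_lt (hρe : ρ ^ 2 < e ^ 2) (hρ : ρ ^ 2 ≤ (x - δ) ^ 2)
    (hx : x < T) : 0 ≤ parabolaSubIndicator δ ρ e T x := by
  rw [parabolaSubIndicator, parabola, indicator_of_notMem (notMem_Ici.2 hx)]
  simpa using div_nonneg (sub_nonneg.2 hρ) (sub_nonneg.2 hρe.le)

theorem parabolaSubIndicator_nonpos_of_sq_le (hρe : ρ ^ 2 < e ^ 2) (hρ : (x - δ) ^ 2 ≤ ρ ^ 2) :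
    parabolaSubIndicator δ ρ e T x ≤ 0 := by
  rw [parabolaSubIndicator, parabola]
  have : ((x - δ) ^ 2 - ρ ^ 2) / (e ^ 2 - ρ ^ 2) ≤ 0 :=
    div_nonpos_of_nonpos_of_nonneg (sub_nonpos.2 hρ) (sub_nonneg.2 hρe.le)
  have : 0 ≤ (Ici T).indicator (1 : ℝ → ℝ) x := indicator_nonneg (fun _ _ => zero_le_one) x
  linarith

theorem parabolaSubIndicator_nonpos_of_le (hρe : ρ ^ 2 < e ^ 2) (hx : T ≤ x)
    (he : (x - δ) ^ 2 ≤ e ^ 2) : parabolaSubIndicator δ ρ e T x ≤ 0 := by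
  rw [parabolaSubIndicator, parabola, indicator_of_mem (mem_Ici.2 hx), Pi.one_apply, sub_nonpos,
    div_le_one (sub_pos.2 hρe)]
  linarith

theorem parabolaSubIndicator_nonneg_of_sq_le (hρe : ρ ^ 2 < e ^ 2) (he : e ^ 2 ≤ (x - δ) ^ 2) :
    0 ≤ parabolaSubIndicator δ ρ e T x := by
  rw [parabolaSubIndicator, parabola]
  have : 1 ≤ ((x - δ) ^ 2 - ρ ^ 2) / (e ^ 2 - ρ ^ 2) := by
    rw [one_le_div (sub_pos.2 hρe)]
    linarith
  have : (Ici T).indicator (1 : ℝ → ℝ) x ≤ 1 := indicator_le_self' (fun _ _ => zero_le_one) x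
  linarith

end Sign

theorem mul_sub_nonneg_of_sign_change {y a x : ℝ} (hneg : x ≤ a → y ≤ 0)
    (hpos : a < x → 0 ≤ y) : 0 ≤ y * (x - a) := by
  rcases le_or_gt x a with h | h
  · exact mul_nonneg_of_nonpos_of_nonpos (hneg h) (sub_nonpos.2 h)
  · exact mul_nonneg (hpos h) (sub_nonneg.2 h.le)

theorem mul_sub_nonneg_of_sign_change' {y a x : ℝ} (hpos : x < a → 0 ≤ y)
    (hneg : a ≤ x → y ≤ 0) : 0 ≤ y * (a - x) := by
  rcases lt_or_ge x a with h | h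
  · exact mul_nonneg (hpos h) (sub_nonneg.2 h.le)
  · exact mul_nonneg_of_nonpos_of_nonpos (hneg h) (sub_nonpos.2 h)

theorem isUnimodalCertificate_parabolaSubIndicator_of_le {δ r m : ℝ} (hr : 0 < r)
    (hm : m ≤ δ) :
    IsUnimodalCertificate (parabolaSubIndicator δ 0 (3 / 2 * r) (δ + r)) m := by
  have hρe : (0 : ℝ) ^ 2 < (3 / 2 * r) ^ 2 := by nlinarith
  refine ⟨m, m, δ + r, δ + 3 / 2 * r, le_rfl, by linarith, fun x hx => ?_, by simp, by simp,
    fun x hx => ?_, fun x hx => ?_, ?_⟩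
  · exact parabolaSubIndicator_nonneg_of_lt hρe (by simpa using sq_nonneg (x - δ)) (by linarith)
  · refine mul_sub_nonneg_of_sign_change' (fun h => ?_) (fun h => ?_)
    · exact parabolaSubIndicator_nonneg_of_lt hρe (by simpa using sq_nonneg (x - δ)) h
    · exact parabolaSubIndicator_nonpos_of_le hρe h (by nlinarith [hx.2])
  · exact parabolaSubIndicator_nonneg_of_sq_le hρe (by nlinarith)
  · rw [integral_Ioc_parabolaSubIndicator _ _ _ _ (by linarith), max_eq_left (by linarith),
      max_eq_right (by linarith)]
    have : 0 ≤ (δ - m) ^ 3 := pow_nonneg (by linarith) 3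
    field_simp
    nlinarith

theorem isUnimodalCertificate_parabolaSubIndicator_of_ge {δ r m : ℝ} (hr : 0 < r)
    (hm : δ + r ≤ m) :
    IsUnimodalCertificate (parabolaSubIndicator δ (r / 2) r (δ + r)) m := by
  have hρe : (r / 2) ^ 2 < r ^ 2 := by nlinarith
  refine ⟨δ - r / 2, δ + r / 2, m, m, by linarith, le_rfl, fun x hx => ?_, fun x hx => ?_, ?_,
    by simp, fun x hx => ?_, by simp⟩
  · exact parabolaSubIndicator_nonneg_of_lt hρe (by nlinarith) (by linarith)
  · refine mul_sub_nonneg_of_sign_change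
      (fun h => parabolaSubIndicator_nonpos_of_sq_le hρe (by nlinarith [hx.1])) (fun h => ?_)
    rcases lt_or_ge x (δ + r) with hT | hT
    · exact parabolaSubIndicator_nonneg_of_lt hρe (by nlinarith) hT
    · exact parabolaSubIndicator_nonneg_of_sq_le hρe (by nlinarith)
  · rw [integral_Ioc_parabolaSubIndicator _ _ _ _ (by linarith), max_eq_left hm,
      max_eq_right (by linarith)]
    have : 0 ≤ (m - δ - r) ^ 2 * (m - δ + 2 * r) := mul_nonneg (sq_nonneg _) (by linarith)
    field_simp
    nlinarith
  · exact parabolaSubIndicator_nonneg_of_sq_le hρe (by nlinarith)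

/-- `he` says that the integral of `parabolaSubIndicator δ ρ e (δ + r)` over `(δ + 2ρ, δ + e]`
vanishes. -/
theorem isUnimodalCertificate_parabolaSubIndicator_of_root {δ ρ r e : ℝ} (hρ : 0 ≤ ρ)
    (hρr : 2 * ρ < r) (hre : r ≤ e)
    (he : 2 * e ^ 2 - (3 * r + 2 * ρ) * e + ρ * (3 * r + 2 * ρ) = 0) :
    IsUnimodalCertificate (parabolaSubIndicator δ ρ e (δ + r)) (δ + 2 * ρ) := by
  have hρe : ρ ^ 2 < e ^ 2 := by nlinarith
  refine ⟨δ - ρ, δ + ρ, δ + r, δ + e, by linarith, by linarith, fun x hx => ?_, fun x hx => ?_,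
    ?_, fun x hx => ?_, fun x hx => ?_, ?_⟩
  · exact parabolaSubIndicator_nonneg_of_lt hρe (by nlinarith) (by linarith)
  · exact mul_sub_nonneg_of_sign_change
      (fun h => parabolaSubIndicator_nonpos_of_sq_le hρe (by nlinarith [hx.1]))
      (fun h => parabolaSubIndicator_nonneg_of_lt hρe (by nlinarith) (by linarith [hx.2]))
  · rw [integral_Ioc_parabolaSubIndicator _ _ _ _ (by linarith), max_eq_right (by linarith),
      max_eq_right (by linarith)]
    rw [show ((δ + 2 * ρ - δ) ^ 3 - (δ - ρ - δ) ^ 3) / 3 - ρ ^ 2 * (δ + 2 * ρ - (δ - ρ)) = 0 by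
      ring, zero_div, sub_self, sub_self]
  · exact mul_sub_nonneg_of_sign_change'
      (fun h => parabolaSubIndicator_nonneg_of_lt hρe (by nlinarith [hx.1]) h)
      (fun h => parabolaSubIndicator_nonpos_of_le hρe h (by nlinarith [hx.2]))
  · exact parabolaSubIndicator_nonneg_of_sq_le hρe (by nlinarith)
  · rw [integral_Ioc_parabolaSubIndicator _ _ _ _ (by linarith), max_eq_left (by linarith),
      max_eq_right (by linarith)]
    have hD : e ^ 2 - ρ ^ 2 ≠ 0 := (sub_pos.2 hρe).ne'
    apply le_of_eq
    field_simp
    linear_combination (e + ρ) * he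

theorem exists_root_of_two_mul_le {ρ r : ℝ} (hρ : 0 ≤ ρ) (hρr : 2 * ρ ≤ r) :
    ∃ e, r ≤ e ∧ 2 * e ^ 2 - (3 * r + 2 * ρ) * e + ρ * (3 * r + 2 * ρ) = 0 ∧
      9 * r ^ 2 ≤ 4 * e ^ 2 + 20 * ρ ^ 2 := by
  set s := √(3 * (3 * r + 2 * ρ) * (r - 2 * ρ))
  have hs : s ^ 2 = 3 * (3 * r + 2 * ρ) * (r - 2 * ρ) :=
    Real.sq_sqrt (mul_nonneg (by linarith) (by linarith))
  have hs0 : 0 ≤ s := Real.sqrt_nonneg _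
  have hrs : r - 2 * ρ ≤ s := by nlinarith
  have hkey : 9 * (r ^ 2 - 4 * ρ ^ 2) ≤ (3 * r + 2 * ρ) * s := by
    by_contra! h
    have hsq := pow_lt_pow_left₀ h (mul_nonneg (by linarith) hs0) two_ne_zero
    have : 0 ≤ (r - 2 * ρ) * ρ ^ 2 * (9 * r + 14 * ρ) :=
      mul_nonneg (mul_nonneg (by linarith) (sq_nonneg ρ)) (by linarith)
    nlinarith
  refine ⟨(3 * r + 2 * ρ + s) / 4, by linarith, by linear_combination (1 / 8) * hs, by nlinarith⟩

theorem div_le_max_of_le_add {t r ρ e : ℝ} (ht₀ : 0 ≤ t) (ht₁ : t ≤ 1) (hρe : ρ ^ 2 < e ^ 2)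
    (hre : r ^ 2 ≤ e ^ 2) (h : 9 * r ^ 2 ≤ 4 * e ^ 2 + 20 * ρ ^ 2) :
    (t * r ^ 2 - ρ ^ 2) / (e ^ 2 - ρ ^ 2) ≤ max (4 / 9 * t) (4 / 3 * t - 1 / 3) := by
  have hD : 0 < e ^ 2 - ρ ^ 2 := sub_pos.2 hρe
  rw [div_le_iff₀ hD]
  rcases le_total t (3 / 8) with ht | ht
  · calc t * r ^ 2 - ρ ^ 2 ≤ 4 / 9 * t * (e ^ 2 - ρ ^ 2) := by
          nlinarith [mul_le_mul_of_nonneg_left h ht₀, mul_le_mul_of_nonneg_right ht (sq_nonneg ρ)]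
      _ ≤ _ := mul_le_mul_of_nonneg_right (le_max_left _ _) hD.le
  · calc t * r ^ 2 - ρ ^ 2 ≤ (4 / 3 * t - 1 / 3) * (e ^ 2 - ρ ^ 2) := by
          nlinarith [mul_le_mul_of_nonneg_left h (sub_nonneg.2 ht₁),
            mul_le_mul_of_nonneg_left hre (sub_nonneg.2 ht)]
      _ ≤ _ := mul_le_mul_of_nonneg_right (le_max_right _ _) hD.le

section Moments

variable {Ω : Type*} [MeasurableSpace Ω] {P : Measure Ω} [IsProbabilityMeasure P] {X : Ω → ℝ}
  {μ : ℝ}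

theorem integrable_sub_sq (hX : Integrable X P) (hX2 : Integrable (fun ω => (X ω - μ) ^ 2) P)
    (δ : ℝ) : Integrable (fun ω => (X ω - δ) ^ 2) P := by
  have hc : Integrable (fun ω => 2 * (μ - δ) * (X ω - μ)) P :=
    (hX.sub (integrable_const μ)).const_mul _
  refine ((hX2.add hc).add (integrable_const ((μ - δ) ^ 2))).congr (ae_of_all _ fun ω => ?_)
  simp only [Pi.add_apply]
  ring

theorem integral_sub_sq (hX : Integrable X P) (hμ : μ = ∫ ω, X ω ∂P)
    (hX2 : Integrable (fun ω => (X ω - μ) ^ 2) P) (δ : ℝ) :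
    ∫ ω, (X ω - δ) ^ 2 ∂P = ∫ ω, (X ω - μ) ^ 2 ∂P + (μ - δ) ^ 2 := by
  have hc : Integrable (fun ω => X ω - μ) P := hX.sub (integrable_const μ)
  have hmean : ∫ ω, (X ω - μ) ∂P = 0 := by
    rw [integral_sub hX (integrable_const μ), ← hμ, integral_const, probReal_univ, one_smul,
      sub_self]
  have h : Integrable (fun ω => (X ω - μ) ^ 2 + 2 * (μ - δ) * (X ω - μ)) P :=
    hX2.add (hc.const_mul _)
  calc ∫ ω, (X ω - δ) ^ 2 ∂P
      = ∫ ω, ((X ω - μ) ^ 2 + 2 * (μ - δ) * (X ω - μ) + (μ - δ) ^ 2) ∂P := by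
        congr 1; funext ω; ring
    _ = ∫ ω, (X ω - μ) ^ 2 ∂P + (μ - δ) ^ 2 := by
        rw [integral_add h (integrable_const _), integral_add hX2 (hc.const_mul _),
          integral_const_mul, hmean, integral_const, probReal_univ, one_smul, mul_zero, add_zero]

end Moments

theorem measure_Ici_le_of_isUnimodalCertificate {law : Measure ℝ} [IsProbabilityMeasure law]
    {f : ℝ → ℝ} {m δ ρ e T : ℝ} (hdens : law = volume.withDensity (fun x => ENNReal.ofReal (f x)))
    (hmono : MonotoneOn f (Iic m)) (hanti : AntitoneOn f (Ici m))
    (hcert : IsUnimodalCertificate (parabolaSubIndicator δ ρ e T) m)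
    (hint : Integrable (fun x => (x - δ) ^ 2) law) :
    (law (Ici T)).toReal ≤ (∫ x, (x - δ) ^ 2 ∂law - ρ ^ 2) / (e ^ 2 - ρ ^ 2) := by
  have hpar : Integrable (parabola δ ρ e) law := (hint.sub (integrable_const _)).div_const _
  have hind : Integrable ((Ici T).indicator (1 : ℝ → ℝ)) law :=
    (integrable_const 1).indicator measurableSet_Ici
  have h := hcert.integral_nonneg (locallyIntegrable_parabolaSubIndicator δ ρ e T)
    (hpar.sub hind) hdens hmono hanti
  simp only [parabolaSubIndicator] at h
  rw [integral_sub hpar hind, integral_indicator_one measurableSet_Ici, measureReal_def] at h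
  have hE : ∫ x, parabola δ ρ e x ∂law = (∫ x, (x - δ) ^ 2 ∂law - ρ ^ 2) / (e ^ 2 - ρ ^ 2) := by
    simp only [parabola]
    rw [integral_div, integral_sub hint (integrable_const _), integral_const, probReal_univ,
      one_smul]
  linarith

theorem measure_sub_ge_le_max {law : Measure ℝ} [IsProbabilityMeasure law] {f : ℝ → ℝ}
    {m μ σ c : ℝ} (hdens : law = volume.withDensity (fun x => ENNReal.ofReal (f x)))
    (hmono : MonotoneOn f (Iic m)) (hanti : AntitoneOn f (Ici m))
    (hint : Integrable (fun x => x) law) (hμ : μ = ∫ x, x ∂law)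
    (hint2 : Integrable (fun x => (x - μ) ^ 2) law) (hσ : σ ^ 2 = ∫ x, (x - μ) ^ 2 ∂law)
    (hc : 0 < c) :
    (law {x | c ≤ x - μ}).toReal ≤
      max (4 / 9 * (σ ^ 2 / (σ ^ 2 + c ^ 2))) (4 / 3 * (σ ^ 2 / (σ ^ 2 + c ^ 2)) - 1 / 3) := by
  set t := σ ^ 2 / (σ ^ 2 + c ^ 2)
  set r := (σ ^ 2 + c ^ 2) / c
  set δ := μ + c - r
  have hσc : 0 < σ ^ 2 + c ^ 2 := by positivity
  have hr : 0 < r := by positivity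
  have ht₀ : 0 ≤ t := by positivity
  have ht₁ : t ≤ 1 := div_le_one_of_le₀ (by linarith [sq_nonneg c]) hσc.le
  have hmom : ∫ x, (x - δ) ^ 2 ∂law = t * r ^ 2 := by
    rw [integral_sub_sq hint hμ hint2, ← hσ]
    simp only [t, r, δ]
    field_simp
    ring
  have hbound (ρ e : ℝ) (hcert : IsUnimodalCertificate (parabolaSubIndicator δ ρ e (δ + r)) m) :
      (law (Ici (δ + r))).toReal ≤ (t * r ^ 2 - ρ ^ 2) / (e ^ 2 - ρ ^ 2) :=
    hmom ▸ measure_Ici_le_of_isUnimodalCertificate hdens hmono hanti hcert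
      (integrable_sub_sq hint hint2 δ)
  have hset : {x | c ≤ x - μ} = Ici (δ + r) := by
    ext x
    simp only [mem_ofPred_eq, mem_Ici, δ]
    constructor <;> intro h <;> linarith
  rw [hset]
  rcases le_or_gt m δ with hA | hA
  · calc _ ≤ (t * r ^ 2 - 0 ^ 2) / ((3 / 2 * r) ^ 2 - 0 ^ 2) :=
          hbound _ _ (isUnimodalCertificate_parabolaSubIndicator_of_le hr hA)
      _ = 4 / 9 * t := by field_simp; ring
      _ ≤ _ := le_max_left _ _
  rcases lt_or_ge m (δ + r) with hB | hC
  · obtain ⟨e, hre, he, hkey⟩ :=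
      exists_root_of_two_mul_le (ρ := (m - δ) / 2) (r := r) (by linarith) (by linarith)
    have hcert := isUnimodalCertificate_parabolaSubIndicator_of_root (δ := δ) (by linarith)
      (by linarith) hre he
    rw [show δ + 2 * ((m - δ) / 2) = m by ring] at hcert
    exact (hbound _ _ hcert).trans
      (div_le_max_of_le_add ht₀ ht₁ (by nlinarith) (by nlinarith) hkey)
  · calc _ ≤ (t * r ^ 2 - (r / 2) ^ 2) / (r ^ 2 - (r / 2) ^ 2) :=
          hbound _ _ (isUnimodalCertificate_parabolaSubIndicator_of_ge hr hC)
      _ = 4 / 3 * t - 1 / 3 := by field_simp; ring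
      _ ≤ _ := le_max_right _ _

/-- One-sided Vysochanskii–Petunin inequality: if a real random variable has a unimodal
density `f` (nondecreasing on `(−∞, m]`, nonincreasing on `[m, ∞)`), finite mean `μ` and
finite variance `σ² > 0`, then `P(X − μ ≥ c) ≤ (4/9)·σ²/(σ² + c²)` for `c ≥ √(5/3)·σ`, and
`P(X − μ ≥ c) ≤ (4/3)·σ²/(σ² + c²) − 1/3` for `0 < c ≤ √(5/3)·σ`. -/
theorem one_sided_vysochanskii_petunin
    (law : Measure ℝ) [IsProbabilityMeasure law] (f : ℝ → ℝ) (m : ℝ)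
    (hdens : law = volume.withDensity (fun x => ENNReal.ofReal (f x)))
    (hmono : MonotoneOn f (Set.Iic m)) (hanti : AntitoneOn f (Set.Ici m))
    (hint : Integrable (fun x => x) law) (μ : ℝ) (hμ : μ = ∫ x, x ∂law)
    (hint2 : Integrable (fun x => (x - μ) ^ 2) law)
    (σ : ℝ) (hσpos : 0 < σ) (hσ : σ ^ 2 = ∫ x, (x - μ) ^ 2 ∂law) :
    (∀ c : ℝ, Real.sqrt (5 / 3) * σ ≤ c →
      (law {x : ℝ | c ≤ x - μ}).toReal ≤ (4 / 9) * (σ ^ 2 / (σ ^ 2 + c ^ 2))) ∧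
    (∀ c : ℝ, 0 < c → c ≤ Real.sqrt (5 / 3) * σ →
      (law {x : ℝ | c ≤ x - μ}).toReal ≤ (4 / 3) * (σ ^ 2 / (σ ^ 2 + c ^ 2)) - 1 / 3) := by
  have hsq : (√(5 / 3) * σ) ^ 2 = 5 / 3 * σ ^ 2 := by rw [mul_pow, Real.sq_sqrt (by norm_num)]
  have hbound (c : ℝ) (hc : 0 < c) := measure_sub_ge_le_max hdens hmono hanti hint hμ hint2 hσ hc
  refine ⟨fun c hc => ?_, fun c hc hc' => ?_⟩
  · have hc₀ : 0 < c := (mul_pos (Real.sqrt_pos.2 (by norm_num)) hσpos).trans_le hc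
    have h : 5 / 3 * σ ^ 2 ≤ c ^ 2 := hsq ▸ pow_le_pow_left₀ (by positivity) hc 2
    have ht : σ ^ 2 / (σ ^ 2 + c ^ 2) ≤ 3 / 8 := by
      rw [div_le_iff₀ (by positivity)]
      linarith
    exact (hbound c hc₀).trans (max_le le_rfl (by linarith))
  · have h : c ^ 2 ≤ 5 / 3 * σ ^ 2 := hsq ▸ pow_le_pow_left₀ hc.le hc' 2
    have ht : 3 / 8 ≤ σ ^ 2 / (σ ^ 2 + c ^ 2) := by
      rw [le_div_iff₀ (by positivity)]
      linarith
    exact (hbound c hc).trans (max_le (by linarith) le_rfl)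
end
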